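/- arXiv:1712.09274 — 2 statements merged into one kernel-verified Lean document; each statement's English description precedes it below -/
import Mathlib

section
/- Let G be a finite group and let Q be a normal subgroup of G which is a 2-group, such that the quotient G/Q is isomorphic to the symmetric group S₃. Assume there exists an involution t ∈ G with t ∉ Q. Then G has a subgroup H such that t ∈ H and H is isomorphic to S₃. -/
open DihedralGroup Equiv

/-- A group containing an order-3 element inverted by an involution `t` has an `S₃`
subgroup containing `t`. -/
lemma s3_subgroup_of_inverted {G : Type*} [Group G] (y t : G)
    (hy : orderOf y = 3) (ht : orderOf t = 2) (hconj : t * y * t = y⁻¹) :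
    ∃ H : Subgroup G, t ∈ H ∧ Nonempty (H ≃* Equiv.Perm (Fin 3)) := by
  have y3 : y ^ 3 = 1 := by rw [← hy]; exact pow_orderOf_eq_one y
  have t2 : t * t = 1 := by
    have := pow_orderOf_eq_one t; rwa [ht, pow_two] at this
  set f : ZMod 3 → G := fun i => y ^ i.val with hf
  have f_add : ∀ i j : ZMod 3, f (i + j) = f i * f j := by
    intro i j
    simp only [hf, ZMod.val_add, ← pow_add]
    conv_rhs => rw [← Nat.div_add_mod (i.val + j.val) 3]
    rw [pow_add, pow_mul, y3, one_pow, one_mul]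
  have f_zero : f 0 = 1 := by simp [hf]
  have tinv : t⁻¹ = t := by
    rw [eq_comm, eq_inv_iff_mul_eq_one, t2]
  have tft : ∀ i : ZMod 3, t * f i * t = f (-i) := by
    intro i
    have h2 : f (-i) = (f i)⁻¹ := by
      rw [eq_inv_iff_mul_eq_one, ← f_add, neg_add_cancel, f_zero]
    have h1 : t * f i * t = (t * y * t⁻¹) ^ i.val := by
      rw [conj_pow, tinv, hf]
    rw [h1, tinv, hconj, inv_pow, h2, hf]
  -- build the hom from DihedralGroup 3
  let ψ : DihedralGroup 3 →* G :=
    { toFun := fun g => match g with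
        | .r i => f i
        | .sr i => t * f i
      map_one' := by show f 0 = 1; exact f_zero
      map_mul' := by
        rintro (i | i) (j | j)
        · show f (i + j) = f i * f j; exact f_add i j
        · show t * f (j - i) = f i * (t * f j)
          have h : f i * t = t * f (-i) := by
            rw [← tft i, ← mul_assoc t (t * f i) t, ← mul_assoc t t (f i), t2, one_mul]
          rw [← mul_assoc, h, mul_assoc, ← f_add]
          ring_nf
        · show t * f (i + j) = t * f i * f j
          rw [f_add, mul_assoc]
        · show f (j - i) = t * f i * (t * f j)
          have : t * f i * t = f (-i) := tft i
          rw [show t * f i * (t * f j) = (t * f i * t) * f j by group, this, ← f_add]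
          ring_nf }
  have hinj : Function.Injective ψ := by
    rw [injective_iff_map_eq_one]
    rintro (i | i) h
    · -- f i = 1
      have hh : y ^ i.val = 1 := h
      have h3 : (3 : ℕ) ∣ i.val := by
        have := orderOf_dvd_of_pow_eq_one hh
        rwa [hy] at this
      have hv : i.val = 0 := Nat.eq_zero_of_dvd_of_lt h3 i.val_lt
      have : i = 0 := by
        have := (ZMod.val_eq_zero i).mp hv
        exact this
      rw [this]
      rfl
    · -- t * f i = 1
      exfalso
      have hti : t = (y ^ i.val)⁻¹ := by
        rw [eq_inv_iff_mul_eq_one]; exact h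
      have : t ^ 3 = 1 := by
        rw [hti, ← inv_pow, ← pow_mul, mul_comm i.val 3, pow_mul, inv_pow, y3, inv_one, one_pow]
      have := orderOf_dvd_of_pow_eq_one this
      rw [ht] at this
      omega
  -- the explicit hom to Perm (Fin 3)
  let χ : DihedralGroup 3 →* Equiv.Perm (Fin 3) :=
    { toFun := fun g => match g with
        | .r i => (finRotate 3) ^ i.val
        | .sr i => (Equiv.swap 0 1) * (finRotate 3) ^ i.val
      map_one' := by decide
      map_mul' := by decide }
  have hχ : Function.Bijective χ := by decide
  refine ⟨ψ.range, ⟨⟨.sr 0, ?_⟩, ⟨(MonoidHom.ofInjective hinj).symm.trans (MulEquiv.ofBijective χ hχ)⟩⟩⟩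
  show t * f 0 = t
  rw [f_zero, mul_one]

/-- Let `G` be a finite group and `Q ⊴ G` a normal `2`-subgroup such that
`G ⧸ Q ≅ S₃`. If `t ∈ G` is an involution with `t ∉ Q`, then `G` has a subgroup `H` with
`t ∈ H` and `H ≅ S₃`. -/
theorem dihedral_baer_suzuki_application {G : Type*} [Group G] [Finite G]
    (Q : Subgroup G) [Q.Normal] (hQ : IsPGroup 2 Q)
    (hquot : Nonempty ((G ⧸ Q) ≃* Equiv.Perm (Fin 3)))
    (t : G) (ht : orderOf t = 2) (htQ : t ∉ Q) :
    ∃ H : Subgroup G, t ∈ H ∧ Nonempty (H ≃* Equiv.Perm (Fin 3)) := by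
  obtain ⟨e⟩ := hquot
  set π := QuotientGroup.mk' Q with hπ
  have t2 : t * t = 1 := by
    have := pow_orderOf_eq_one t; rwa [ht, pow_two] at this
  have tinv : t⁻¹ = t := by rw [eq_comm, eq_inv_iff_mul_eq_one, t2]
  obtain ⟨c, hc⟩ := QuotientGroup.mk'_surjective Q (e.symm (finRotate 3))
  have hec : e (π c) = finRotate 3 := by rw [hc, e.apply_symm_apply]
  have hπc3 : orderOf (π c) = 3 := by
    have h1 : orderOf (e (π c)) = orderOf (π c) :=
      orderOf_injective e.toMonoidHom e.injective (π c)
    rw [hec] at h1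
    rw [← h1]
    haveI : Fact (Nat.Prime 3) := ⟨by norm_num⟩
    exact orderOf_eq_prime (by decide) (by decide)
  have hπt2 : (e (π t)) ^ 2 = 1 := by
    rw [← map_pow, ← map_pow, ← ht, pow_orderOf_eq_one, map_one, map_one]
  have hπt1 : e (π t) ≠ 1 := by
    intro h
    apply htQ
    have : π t = 1 := e.injective (by rw [h, map_one])
    exact (QuotientGroup.eq_one_iff t).mp this
  have key : ∀ a : Equiv.Perm (Fin 3), a ^ 2 = 1 → a ≠ 1 →
      a * finRotate 3 * a = (finRotate 3)⁻¹ := by decide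
  have hconjq : π t * π c * π t = (π c)⁻¹ := by
    apply e.injective
    rw [map_mul, map_mul, map_inv, hec]
    exact key _ hπt2 hπt1
  set x := c⁻¹ * t * c * t with hxdef
  have hπx : π x = π c := by
    have h3 : (π c) ^ 3 = 1 := by rw [← hπc3]; exact pow_orderOf_eq_one _
    have : π x = (π c)⁻¹ * (π t * π c * π t) := by
      rw [hxdef]; simp only [map_mul, map_inv]; group
    rw [this, hconjq]
    calc (π c)⁻¹ * (π c)⁻¹ = (π c) ^ 3 * (π c)⁻¹ * (π c)⁻¹ := by rw [h3, one_mul]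
    _ = π c := by group
  have hdvd : (3 : ℕ) ∣ orderOf x := by
    have := orderOf_map_dvd π x
    rwa [hπx, hπc3] at this
  have htxt : t * x * t = x⁻¹ := by
    calc t * x * t = t * c⁻¹ * t * c * (t * t) := by rw [hxdef]; group
    _ = t * c⁻¹ * t * c := by rw [t2, mul_one]
    _ = t⁻¹ * c⁻¹ * t⁻¹ * c := by rw [tinv]
    _ = x⁻¹ := by rw [hxdef]; group
  obtain ⟨k, hk⟩ := hdvd
  have hnpos : 0 < orderOf x := orderOf_pos x
  have hkpos : 0 < k := by omega
  set y := x ^ k with hydef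
  have hyo : orderOf y = 3 := by
    rw [hydef, orderOf_pow, hk]
    have hg : Nat.gcd (3 * k) k = k := by
      rw [Nat.gcd_comm]
      exact Nat.gcd_eq_left (dvd_mul_left k 3)
    rw [hg, Nat.mul_div_cancel _ hkpos]
  have htyt : t * y * t = y⁻¹ := by
    calc t * y * t = t * x ^ k * t⁻¹ := by rw [tinv]
    _ = (t * x * t⁻¹) ^ k := by rw [conj_pow]
    _ = (x⁻¹) ^ k := by rw [tinv, htxt]
    _ = y⁻¹ := by rw [hydef, inv_pow]
  exact s3_subgroup_of_inverted y t hyo ht htyt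
end

section
/- Let G be a finite group whose Sylow 2-subgroups are dihedral of order 2ⁿ with n ≥ 3, let P be a Sylow 2-subgroup of G, and let H be a normal subgroup of G whose index |G : H| is odd. Then G = H·C_G(P), i.e. every element of G is a product of an element of H and an element of C_G(P). -/
open Pointwise


open DihedralGroup

lemma dihedral_aut_odd_order_eq_one (m : ℕ) (hm : 2 ≤ m)
    (φ : MulAut (DihedralGroup (2 ^ m))) (hodd : Odd (orderOf φ)) : φ = 1 := by
  haveI : NeZero (2 ^ m) := ⟨pow_ne_zero m two_ne_zero⟩
  set t := orderOf φ with ht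
  have ht1 : φ ^ t = 1 := pow_orderOf_eq_one φ
  have htpos : 1 ≤ t := hodd.pos
  -- φ (r 1) is a rotation
  have hord : orderOf (φ (r 1)) = 2 ^ m := by
    rw [MulEquiv.orderOf_eq φ, orderOf_r_one]
  obtain ⟨a, ha⟩ : ∃ a, φ (r 1) = r a := by
    cases h : φ (r 1) with
    | r a => exact ⟨a, rfl⟩
    | sr a =>
      exfalso
      rw [h, orderOf_sr] at hord
      have : (2:ℕ) ^ 2 ≤ 2 ^ m := Nat.pow_le_pow_right (by norm_num) hm
      omega
  have hrpow : ∀ (b : ZMod (2^m)) (k : ℕ), (r b : DihedralGroup (2^m)) ^ k = r ((k : ZMod (2^m)) * b) := by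
    intro b k
    induction k with
    | zero => rw [pow_zero, Nat.cast_zero, zero_mul, one_def]
    | succ k ih =>
      rw [pow_succ, ih, r_mul_r]
      congr 1
      push_cast
      ring
  have hrc : ∀ c : ZMod (2^m), φ (r c) = r (a * c) := by
    intro c
    have h1 : (r c : DihedralGroup (2^m)) = (r 1) ^ c.val := by
      rw [r_one_pow, ZMod.natCast_val, ZMod.cast_id]
    rw [h1, map_pow, ha, hrpow]
    congr 1
    rw [ZMod.natCast_val, ZMod.cast_id, mul_comm]
  have hiter : ∀ (j : ℕ) (c : ZMod (2^m)), (φ ^ j) (r c) = r (a ^ j * c) := by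
    intro j
    induction j with
    | zero => intro c; simp
    | succ j ih =>
      intro c
      rw [pow_succ, MulAut.mul_apply, hrc, ih]
      congr 1
      ring
  have hat : a ^ t = 1 := by
    have := hiter t 1
    rw [ht1, mul_one] at this
    simpa using this.symm
  -- a is a unit of odd order in a 2-group of units, hence a = 1
  have ha1 : a = 1 := by
    have hu : a * a ^ (t - 1) = 1 := by
      rw [← pow_succ', Nat.sub_add_cancel htpos]
      exact hat
    have hU : IsUnit a := IsUnit.of_mul_eq_one _ hu
    obtain ⟨u, hu'⟩ := hU
    have hut : u ^ t = 1 := by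
      ext
      push_cast [hu']
      exact hat
    have h1 : orderOf u ∣ t := orderOf_dvd_of_pow_eq_one hut
    have h2 : orderOf u ∣ 2 ^ (m - 1) := by
      have := orderOf_dvd_natCard u
      rwa [Nat.card_eq_fintype_card, ZMod.card_units_eq_totient,
        Nat.totient_prime_pow Nat.prime_two (by omega : 0 < m), Nat.mul_one] at this
    have hcop : Nat.Coprime t (2 ^ (m - 1)) := (hodd.coprime_two_right).pow_right _
    have : orderOf u ∣ Nat.gcd t (2 ^ (m-1)) := Nat.dvd_gcd h1 h2
    rw [hcop] at this
    have hou : orderOf u = 1 := Nat.dvd_one.mp this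
    have : u = 1 := orderOf_eq_one_iff.mp hou
    rw [← hu', this, Units.val_one]
  rw [ha1] at hrc
  simp only [one_mul] at hrc
  -- now for the reflections
  obtain ⟨b, hb⟩ : ∃ b, φ (sr 0) = sr b := by
    cases h : φ (sr 0) with
    | sr b => exact ⟨b, rfl⟩
    | r c =>
      exfalso
      have : φ (r c) = φ (sr 0) := by rw [h, hrc]
      have := φ.injective this
      simp at this
  have hsrc : ∀ c : ZMod (2^m), φ (sr c) = sr (b + c) := by
    intro c
    have h1 : (sr c : DihedralGroup (2^m)) = sr 0 * r c := by rw [sr_mul_r, zero_add]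
    rw [h1, map_mul, hb, hrc, sr_mul_r]
  have hiter2 : ∀ (j : ℕ) (c : ZMod (2^m)), (φ ^ j) (sr c) = sr ((j : ZMod (2^m)) * b + c) := by
    intro j
    induction j with
    | zero => intro c; simp
    | succ j ih =>
      intro c
      rw [pow_succ, MulAut.mul_apply, hsrc, ih]
      congr 1
      push_cast
      ring
  have hb0 : b = 0 := by
    have := hiter2 t 0
    rw [ht1, add_zero] at this
    have h2 : ((t : ZMod (2^m))) * b = 0 := by simpa using this.symm
    have hu : IsUnit ((t : ZMod (2^m))) :=
      (ZMod.isUnit_iff_coprime t (2^m)).mpr ((hodd.coprime_two_right).pow_right _)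
    obtain ⟨u, hu'⟩ := hu
    rwa [← hu', Units.mul_right_eq_zero] at h2
  rw [hb0] at hsrc
  simp only [zero_add] at hsrc
  ext x
  cases x with
  | r c => rw [hrc]; rfl
  | sr c => rw [hsrc]; rfl

/-- Let `G` be a finite group whose Sylow `2`-subgroups are dihedral of
order `2 ^ n` with `n ≥ 3`, let `P` be a Sylow `2`-subgroup of `G` and `H ⊴ G` a normal
subgroup of odd index. Then `G = H · C_G(P)`, i.e. every element of `G` is a product of an
element of `H` and an element of `C_G(P)`. -/
theorem eq_mul_centralizer_of_normal_odd_index_dihedral_sylow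
    {G : Type*} [Group G] [Finite G] (n : ℕ) (hn : 3 ≤ n) (P : Sylow 2 G)
    (hP : Nonempty ((P : Subgroup G) ≃* DihedralGroup (2 ^ (n - 1))))
    (H : Subgroup G) [H.Normal] (hH : Odd H.index) :
    ∀ g : G, ∃ h ∈ H, ∃ c ∈ Subgroup.centralizer ((P : Subgroup G) : Set G), g = h * c := by
  haveI : Fact (Nat.Prime 2) := ⟨Nat.prime_two⟩
  obtain ⟨e⟩ := hP
  have hm : 2 ≤ n - 1 := by omega
  intro g
  -- Step 1 : P ≤ H
  have hPH : (P : Subgroup G) ≤ H := by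
    intro x hx
    obtain ⟨k, hk⟩ := P.2 ⟨x, hx⟩
    have hxk : x ^ (2 ^ k) = 1 := by
      simpa [SubmonoidClass.mk_pow, Subtype.ext_iff] using hk
    have h1 : ((QuotientGroup.mk' H) x) ^ (2 ^ k) = 1 := by
      rw [← map_pow, hxk, map_one]
    have h2 : orderOf ((QuotientGroup.mk' H) x) ∣ 2 ^ k := orderOf_dvd_of_pow_eq_one h1
    have h3 : orderOf ((QuotientGroup.mk' H) x) ∣ H.index := by
      rw [Subgroup.index_eq_card]
      exact orderOf_dvd_natCard _
    have hcop : Nat.Coprime (2 ^ k) H.index := (Nat.coprime_two_left.mpr hH).pow_left _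
    have h4 : orderOf ((QuotientGroup.mk' H) x) ∣ Nat.gcd (2 ^ k) H.index :=
      Nat.dvd_gcd h2 h3
    rw [hcop, Nat.dvd_one, orderOf_eq_one_iff] at h4
    exact (QuotientGroup.eq_one_iff x).mp h4
  -- Step 2 : Frattini argument
  have hFrat : Subgroup.normalizer ((P : Subgroup G) : Set G) ⊔ H = ⊤ :=
    Sylow.normalizer_sup_eq_top' P hPH
  set N : Subgroup G := Subgroup.normalizer ((P : Subgroup G) : Set G) with hN
  -- Step 3 : Schur-Zassenhaus complement of P in its normalizer
  set P' : Subgroup ↥N := (P : Subgroup G).subgroupOf N with hP'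
  haveI : P'.Normal := Subgroup.normal_in_normalizer
  have ePP : ↥P' ≃* ↥(P : Subgroup G) :=
    Subgroup.subgroupOfEquivOfLe Subgroup.le_normalizer
  have hPindex : Odd (P : Subgroup G).index := by
    have h2 := P.not_dvd_index
    rcases Nat.even_or_odd (P : Subgroup G).index with he | ho
    · exact absurd he.two_dvd h2
    · exact ho
  have hP'odd : Odd P'.index := by
    have hdvd : P'.index ∣ (P : Subgroup G).index := by
      have := Subgroup.relIndex_mul_index
        (Subgroup.le_normalizer (H := (P : Subgroup G)))
      exact Dvd.intro _ this
    rcases Nat.even_or_odd P'.index with he | ho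
    · exact absurd (dvd_trans he.two_dvd hdvd) (by
        rcases hPindex with ⟨j, hj⟩
        omega)
    · exact ho
  have hcardP' : ∃ r, Nat.card ↥P' = 2 ^ r := by
    have hpg : IsPGroup 2 ↥P' := P.2.of_equiv ePP.symm
    exact hpg.exists_card_eq
  obtain ⟨r, hr⟩ := hcardP'
  have hcop : Nat.Coprime (Nat.card ↥P') P'.index := by
    rw [hr]
    exact (Nat.coprime_two_left.mpr hP'odd).pow_left _
  obtain ⟨K, hK⟩ := Subgroup.exists_right_complement'_of_coprime hcop
  have hKodd : Odd (Nat.card ↥K) := by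
    have := hK.symm.index_eq_card
    rwa [← this]
  -- Step 4 : K centralises P
  have hKcent : ∀ k : ↥N, k ∈ K → (k : G) ∈ Subgroup.centralizer ((P : Subgroup G) : Set G) := by
    intro k hk
    have hkodd : Odd (orderOf k) := by
      have h1 : orderOf (⟨k, hk⟩ : ↥K) ∣ Nat.card ↥K := orderOf_dvd_natCard _
      have h2 : orderOf (K.subtype (⟨k, hk⟩ : ↥K)) = orderOf (⟨k, hk⟩ : ↥K) :=
        orderOf_injective K.subtype Subtype.coe_injective ⟨k, hk⟩
      rcases Nat.even_or_odd (orderOf k) with he | ho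
      · exfalso
        have : (2 : ℕ) ∣ Nat.card ↥K := dvd_trans (by
          rw [← h2]
          exact he.two_dvd) h1
        rcases hKodd with ⟨j, hj⟩
        omega
      · exact ho
    -- the conjugation automorphism, transported to the dihedral group
    set e1 : ↥P' ≃* DihedralGroup (2 ^ (n - 1)) := ePP.trans e with he1
    set χ : ↥N →* MulAut (DihedralGroup (2 ^ (n - 1))) :=
      (MulAut.congr e1).toMonoidHom.comp MulAut.conjNormal with hχ
    have hdvd : orderOf (χ k) ∣ orderOf k := orderOf_map_dvd χ k
    have hχodd : Odd (orderOf (χ k)) := by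
      rcases Nat.even_or_odd (orderOf (χ k)) with he | ho
      · exfalso
        rcases hkodd with ⟨j, hj⟩
        have := dvd_trans he.two_dvd hdvd
        omega
      · exact ho
    have hχ1 : χ k = 1 := dihedral_aut_odd_order_eq_one (n - 1) hm (χ k) hχodd
    have hconj1 : (MulAut.conjNormal k : MulAut ↥P') = 1 := by
      have : (MulAut.congr e1) (MulAut.conjNormal k) = (MulAut.congr e1) 1 := by
        rw [map_one]
        exact hχ1
      exact (MulAut.congr e1).injective this
    rw [Subgroup.mem_centralizer_iff]
    intro y hy
    have hyN : y ∈ N := Subgroup.le_normalizer hy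
    have hyP' : (⟨y, hyN⟩ : ↥N) ∈ P' := by
      rw [hP', Subgroup.mem_subgroupOf]
      exact hy
    have h3 : MulAut.conjNormal k (⟨⟨y, hyN⟩, hyP'⟩ : ↥P') = ⟨⟨y, hyN⟩, hyP'⟩ := by
      rw [hconj1]
      rfl
    have h4 : ((k : G) * y * (k : G)⁻¹ : G) = y := by
      have h5 := congrArg (fun z : ↥P' => ((z : ↥N) : G)) h3
      simpa [MulAut.conjNormal_apply] using h5
    have h6 : (k : G) * y = y * (k : G) := by
      calc (k : G) * y = ((k : G) * y * (k : G)⁻¹) * (k : G) := by group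
        _ = y * (k : G) := by rw [h4]
    exact h6.symm
  -- Step 5 : assemble
  have hg : g ∈ (N : Set G) * (H : Set G) := by
    rw [← Subgroup.mul_normal]
    rw [hFrat]
    trivial
  obtain ⟨x, hx, h1, hh1, hxh⟩ := hg
  obtain ⟨⟨p, k⟩, hpk, -⟩ := hK.existsUnique (⟨x, hx⟩ : ↥N)
  have hxeq : x = ((p : ↥N) : G) * ((k : ↥N) : G) := by
    have := congrArg (fun z : ↥N => (z : G)) hpk
    simpa using this.symm
  have hpP : ((p : ↥N) : G) ∈ (P : Subgroup G) := Subgroup.mem_subgroupOf.mp p.2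
  have hkC : ((k : ↥N) : G) ∈ Subgroup.centralizer ((P : Subgroup G) : Set G) :=
    hKcent (k : ↥N) k.2
  refine ⟨((p : ↥N) : G) * (((k : ↥N) : G) * h1 * ((k : ↥N) : G)⁻¹), ?_, ((k : ↥N) : G), hkC, ?_⟩
  · exact H.mul_mem (hPH hpP) (‹H.Normal›.conj_mem h1 hh1 _)
  · rw [← hxh, hxeq]
    group
end
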